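/- For every φ ∈ ℝ, p ∈ ℝ³, and indices i, j, k, the partial derivative ∂_{p^k} D^{ij}[φ] = (δ^i_k p^j + δ^j_k p^i)/√(e^{2φ}+|p|²) − D^{ij}[φ] p_k/(e^{2φ}+|p|²) is bounded in absolute value by a constant independent of φ and p. -/

import Mathlib

/-! With `r = √(e^{2φ} + |p|²)` one has `|p| ≤ r` and `|D^{ij}| ≤ r`, the latter because
`|e^{2φ} δ^{ij} + p^i p^j| ≤ e^{2φ} + |p|² = r²`. Hence in the derivative along `v`,
`(v^i p^j + v^j p^i)/r - D^{ij} ⟪p, v⟫/r²`, the two terms are bounded by `2|v|` and `|v|`,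
so `C = 3` works. -/

noncomputable def Dmat (φ : ℝ) (p : EuclideanSpace ℝ (Fin 3)) (i j : Fin 3) : ℝ :=
  (Real.exp (2 * φ) * (if i = j then 1 else 0) + p i * p j) /
    Real.sqrt (Real.exp (2 * φ) + ‖p‖ ^ 2)

open Real

lemma abs_apply_le_norm {ι : Type*} [Fintype ι] (w : EuclideanSpace ℝ ι) (a : ι) :
    |w a| ≤ ‖w‖ :=
  (norm_eq_abs (w a)).symm.trans_le (PiLp.norm_apply_le w a)

lemma fderiv_Dmat_apply (φ : ℝ) (p v : EuclideanSpace ℝ (Fin 3)) (i j : Fin 3) :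
    fderiv ℝ (fun q => Dmat φ q i j) p v =
      (v i * p j + v j * p i) / √(exp (2 * φ) + ‖p‖ ^ 2) -
        Dmat φ p i j * inner ℝ p v / (exp (2 * φ) + ‖p‖ ^ 2) := by
  simp only [Dmat, div_eq_mul_inv]
  set E := exp (2 * φ)
  have hg : 0 < E + ‖p‖ ^ 2 := by positivity
  have hS : 0 < √(E + ‖p‖ ^ 2) := sqrt_pos.2 hg
  have hnum : HasFDerivAt
      (fun q : EuclideanSpace ℝ (Fin 3) => E * (if i = j then 1 else 0) + q i * q j)
      (p i • EuclideanSpace.proj j + p j • EuclideanSpace.proj i) p :=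
    (((EuclideanSpace.proj i : EuclideanSpace ℝ (Fin 3) →L[ℝ] ℝ).hasFDerivAt (x := p)).fun_mul
      (EuclideanSpace.proj j : EuclideanSpace ℝ (Fin 3) →L[ℝ] ℝ).hasFDerivAt).const_add _
  have hsqrt := ((hasFDerivAt_id p).norm_sq.const_add E).sqrt hg.ne'
  have hD := hnum.fun_mul ((hasDerivAt_inv hS.ne').comp_hasFDerivAt p hsqrt)
  simp only [Function.comp_def, id] at hD
  rw [hD.fderiv]
  simp only [add_apply, smul_apply, ContinuousLinearMap.comp_id, coe_innerSL_apply,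
    PiLp.proj_apply, smul_eq_mul, nsmul_eq_mul]
  field_simp
  rw [sq_sqrt hg.le]
  ring

lemma norm_le_sqrt_exp_add_norm_sq (φ : ℝ) (p : EuclideanSpace ℝ (Fin 3)) :
    ‖p‖ ≤ √(exp (2 * φ) + ‖p‖ ^ 2) :=
  le_sqrt_of_sq_le (le_add_of_nonneg_left (exp_pos _).le)

lemma abs_Dmat_le (φ : ℝ) (p : EuclideanSpace ℝ (Fin 3)) (i j : Fin 3) :
    |Dmat φ p i j| ≤ √(exp (2 * φ) + ‖p‖ ^ 2) := by
  have hg : 0 < exp (2 * φ) + ‖p‖ ^ 2 := by positivity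
  have hS := sqrt_pos.2 hg
  rw [Dmat, abs_div, abs_of_pos hS, div_le_iff₀ hS, mul_self_sqrt hg.le]
  have hδ : |(if i = j then 1 else 0 : ℝ)| ≤ 1 := by split_ifs <;> simp
  calc |exp (2 * φ) * (if i = j then 1 else 0) + p i * p j|
      ≤ exp (2 * φ) * |(if i = j then 1 else 0 : ℝ)| + |p i| * |p j| := by
        grw [abs_add_le, abs_mul, abs_mul, abs_of_pos (exp_pos _)]
    _ ≤ exp (2 * φ) * 1 + ‖p‖ * ‖p‖ := by grw [hδ, abs_apply_le_norm p i, abs_apply_le_norm p j]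
    _ = exp (2 * φ) + ‖p‖ ^ 2 := by ring

lemma abs_fderiv_Dmat_apply_le (φ : ℝ) (p v : EuclideanSpace ℝ (Fin 3)) (i j : Fin 3) :
    |fderiv ℝ (fun q => Dmat φ q i j) p v| ≤ 3 * ‖v‖ := by
  rw [fderiv_Dmat_apply]
  set S := √(exp (2 * φ) + ‖p‖ ^ 2)
  have hg : 0 < exp (2 * φ) + ‖p‖ ^ 2 := by positivity
  have hS : 0 < S := sqrt_pos.2 hg
  have hpS : ‖p‖ ≤ S := norm_le_sqrt_exp_add_norm_sq φ p
  have hlin : |(v i * p j + v j * p i) / S| ≤ 2 * ‖v‖ := by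
    rw [abs_div, abs_of_pos hS, div_le_iff₀ hS]
    calc |v i * p j + v j * p i| ≤ |v i| * |p j| + |v j| * |p i| := by
          grw [abs_add_le, abs_mul, abs_mul]
      _ ≤ ‖v‖ * S + ‖v‖ * S := by
          grw [abs_apply_le_norm v i, abs_apply_le_norm v j, abs_apply_le_norm p i,
            abs_apply_le_norm p j, hpS]
      _ = 2 * ‖v‖ * S := by ring
  have hquad : |Dmat φ p i j * inner ℝ p v / (exp (2 * φ) + ‖p‖ ^ 2)| ≤ ‖v‖ := by
    rw [abs_div, abs_of_pos hg, div_le_iff₀ hg, ← mul_self_sqrt hg.le, abs_mul]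
    calc |Dmat φ p i j| * |inner ℝ p v| ≤ S * (‖p‖ * ‖v‖) :=
          mul_le_mul (abs_Dmat_le φ p i j) (abs_real_inner_le_norm p v) (abs_nonneg _) hS.le
      _ ≤ S * (S * ‖v‖) := by gcongr
      _ = ‖v‖ * (S * S) := by ring
  calc _ ≤ _ := abs_sub _ _
    _ ≤ 2 * ‖v‖ + ‖v‖ := add_le_add hlin hquad
    _ = 3 * ‖v‖ := by ring

theorem stmt_9 : ∃ C : ℝ, 0 < C ∧
    ∀ (φ : ℝ) (p : EuclideanSpace ℝ (Fin 3)) (i j k : Fin 3),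
      (fderiv ℝ (fun q => Dmat φ q i j) p (EuclideanSpace.single k 1) =
        ((if i = k then 1 else 0) * p j + (if j = k then 1 else 0) * p i) /
          Real.sqrt (Real.exp (2 * φ) + ‖p‖ ^ 2) -
          Dmat φ p i j * p k / (Real.exp (2 * φ) + ‖p‖ ^ 2)) ∧
      |fderiv ℝ (fun q => Dmat φ q i j) p (EuclideanSpace.single k 1)| ≤ C := by
  refine ⟨3, by norm_num, fun φ p i j k => ⟨?_, ?_⟩⟩
  · simp only [fderiv_Dmat_apply, PiLp.single_apply, EuclideanSpace.inner_single_right,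
      conj_trivial, one_mul]
  · simpa only [PiLp.norm_single, norm_one, mul_one] using
      abs_fderiv_Dmat_apply_le φ p (EuclideanSpace.single k 1) i j
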